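/- Let (X_t, d_t) for t ∈ T be separable metric spaces, and let X ⊆ ∏_{t∈T} X_t be a Baire space (with the product topology) that is dense in Y = ∏_{t∈T} X_t equipped with the topology of uniform convergence on T. Then every uncountable regular cardinal is a caliber of X, and hence X is a strongly Baire space. -/

import Mathlib

/-!
A nonempty open subset of `S` contains a basic neighbourhood of one of its points, fixed by a
finite set of coordinates and a radius `1 / (n + 1)`. Given `κ` of them, the pigeonhole principle,
a weak Δ-system lemma and the separability of the finite products `∏_{t ∈ R} X t` leave `κ` of
them with a common radius `δ`, with supports pairwise meeting only inside a fixed finite root `R`,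
and with centres `δ / 2`-close on `R`. The centres can then be glued into one point of the product
that is `δ / 2`-close to each centre on its support, and uniform density provides a point of `S`
in all `κ` neighbourhoods.

For strong Baireness, a nonempty open set covered by the closed sets `B ξ` but disjoint from all
their interiors is covered by a monotone cofinal subsequence of length `cof α`. If `cof α = ℵ₀`
this contradicts the Baire property; otherwise `cof α` is an uncountable regular cardinal, and
the caliber property yields a point outside `cof α` many, hence cofinally many, hence all of the
`B ξ`.
-/

universe u

def IsCaliber (X : Type u) [TopologicalSpace X] (κ : Cardinal.{u}) : Prop :=
  ∀ (ι : Type u) (U : ι → Set X), Cardinal.mk ι = κ →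
    (∀ i, IsOpen (U i) ∧ (U i).Nonempty) →
    ∃ B : Set ι, Cardinal.mk B = κ ∧ (⋂ i ∈ B, U i).Nonempty

/-- `X` is strongly Baire if for every ordinal `α` and all increasing families
`(A ξ : ξ < α)`, `(B ξ : ξ < α)` of closed subsets of `X` such that `(B ξ)` occupies
`(A ξ)` (i.e. `A ξ ⊆ B ξ` for all `ξ < α` and `A β ⊆ ⋃_{ξ<β} B ξ` for limit `β < α`),
the interior of `⋃_{ξ<α} A ξ` is contained in the closure of `⋃_{ξ<α} interior (B ξ)`. -/
def StronglyBaire (X : Type u) [TopologicalSpace X] : Prop :=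
  ∀ (α : Ordinal.{u}) (A B : Ordinal.{u} → Set X),
    (∀ ξ < α, IsClosed (A ξ)) → (∀ ξ < α, IsClosed (B ξ)) →
    (∀ ξ η, ξ ≤ η → η < α → A ξ ⊆ A η) →
    (∀ ξ η, ξ ≤ η → η < α → B ξ ⊆ B η) →
    (∀ ξ < α, A ξ ⊆ B ξ) →
    (∀ β, Order.IsSuccLimit β → β < α → A β ⊆ ⋃ ξ ∈ Set.Iio β, B ξ) →
    interior (⋃ ξ ∈ Set.Iio α, A ξ) ⊆ closure (⋃ ξ ∈ Set.Iio α, interior (B ξ))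


open Cardinal Set Filter Topology

section Combinatorics

variable {ι : Type u} {κ : Cardinal.{u}}

theorem exists_mk_fiber_eq {β : Type u} (hκ : κ.IsRegular) {A : Set ι} (hA : #A = κ)
    (f : ι → β) (hβ : #β < κ) : ∃ b, #{i ∈ A | f i = b} = κ := by
  by_contra! h
  have hlt : ∀ b, #{i ∈ A | f i = b} < κ := fun b =>
    ((mk_le_mk_of_subset (sep_subset _ _)).trans hA.le).lt_of_ne (h b)
  have hcover : A ⊆ ⋃ b, {i ∈ A | f i = b} := fun i hi => mem_iUnion.2 ⟨f i, hi, rfl⟩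
  exact (hA ▸ mk_le_mk_of_subset hcover).not_gt
    ((card_iUnion_lt_iff_forall_of_isRegular hκ hβ).2 hlt)

theorem exists_pairwiseDisjoint_subset_mk_eq {T : Type u} (hκ : κ.IsRegular) (hℵ : ℵ₀ < κ)
    (F : ι → Finset T) {A : Set ι} (hA : #A = κ)
    (hsmall : ∀ t, #{i ∈ A | t ∈ F i} < κ) :
    ∃ B ⊆ A, #B = κ ∧ B.PairwiseDisjoint F := by
  obtain ⟨C, hC⟩ := zorn_subset {C | C ⊆ A ∧ C.PairwiseDisjoint F} fun c hc hchain =>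
    ⟨⋃₀ c, ⟨sUnion_subset fun s hs => (hc hs).1,
      (pairwiseDisjoint_sUnion hchain.directedOn).2 fun s hs => (hc hs).2⟩,
      fun _ => subset_sUnion_of_mem⟩
  refine ⟨C, hC.prop.1, ?_, hC.prop.2⟩
  by_contra hne
  have hC_lt : #C < κ := ((mk_le_mk_of_subset hC.prop.1).trans hA.le).lt_of_ne hne
  set meets : Set ι := ⋃ j ∈ C, ⋃ t ∈ (F j : Set T), {i ∈ A | t ∈ F i}
  have hmeets_lt : #meets < κ :=
    (card_biUnion_lt_iff_forall_of_isRegular hκ hC_lt).2 fun j _ =>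
      (card_biUnion_lt_iff_forall_of_isRegular hκ
        ((F j).finite_toSet.lt_aleph0.trans hℵ)).2 fun t _ => hsmall t
  obtain ⟨i, hiA, hi⟩ : ∃ i ∈ A, i ∉ C ∪ meets := by
    by_contra! h
    exact (hA ▸ mk_le_mk_of_subset h).not_gt
      ((mk_union_le _ _).trans_lt (add_lt_of_lt hκ.aleph0_le hC_lt hmeets_lt))
  rw [mem_union, not_or] at hi
  refine hi.1 (hC.mem_of_prop_insert ⟨insert_subset hiA hC.prop.1, hC.prop.2.insert ?_⟩)
  intro j hj _
  rw [Finset.disjoint_left]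
  exact fun t hti htj => hi.2 (mem_biUnion hj (mem_biUnion htj ⟨hiA, hti⟩))

theorem exists_subset_mk_eq_inter_subset_of_card_le {T : Type u} [DecidableEq T] (hκ : κ.IsRegular)
    (hℵ : ℵ₀ < κ) (m : ℕ) (F : ι → Finset T) {A : Set ι} (hA : #A = κ)
    (hcard : ∀ i ∈ A, (F i).card ≤ m) :
    ∃ B ⊆ A, #B = κ ∧ ∃ R : Finset T, ∀ i ∈ B, ∀ j ∈ B, i ≠ j → F i ∩ F j ⊆ R := by
  induction m generalizing F A with
  | zero =>
    refine ⟨A, subset_rfl, hA, ∅, fun i hi j _ _ => ?_⟩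
    rw [Finset.card_eq_zero.1 (Nat.le_zero.1 (hcard i hi)), Finset.empty_inter]
  | succ m ih =>
    by_cases h : ∃ t, #{i ∈ A | t ∈ F i} = κ
    · obtain ⟨t, ht⟩ := h
      obtain ⟨B, hB, hBκ, R, hR⟩ := ih (fun i => (F i).erase t) ht fun i hi => by
        rw [Finset.card_erase_of_mem hi.2]
        exact Nat.sub_le_of_le_add (hcard i hi.1)
      refine ⟨B, fun i hi => (hB hi).1, hBκ, insert t R, fun i hi j hj hij x hx => ?_⟩
      rw [Finset.mem_inter] at hx
      rw [Finset.mem_insert]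
      by_cases hxt : x = t
      · exact Or.inl hxt
      · exact Or.inr (hR i hi j hj hij (Finset.mem_inter.2
          ⟨Finset.mem_erase.2 ⟨hxt, hx.1⟩, Finset.mem_erase.2 ⟨hxt, hx.2⟩⟩))
    · push Not at h
      obtain ⟨B, hB, hBκ, hdisj⟩ := exists_pairwiseDisjoint_subset_mk_eq hκ hℵ F hA fun t =>
        ((mk_le_mk_of_subset (sep_subset _ _)).trans hA.le).lt_of_ne (h t)
      refine ⟨B, hB, hBκ, ∅, fun i hi j hj hij => ?_⟩
      rw [Finset.disjoint_iff_inter_eq_empty.1 (hdisj hi hj hij)]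

/-- A weak form of the Δ-system lemma. -/
theorem exists_subset_mk_eq_inter_subset {T : Type u} [DecidableEq T] (hκ : κ.IsRegular)
    (hℵ : ℵ₀ < κ) (F : ι → Finset T) {A : Set ι} (hA : #A = κ) :
    ∃ B ⊆ A, #B = κ ∧ ∃ R : Finset T, ∀ i ∈ B, ∀ j ∈ B, i ≠ j → F i ∩ F j ⊆ R := by
  obtain ⟨⟨m⟩, hm⟩ := exists_mk_fiber_eq hκ hA (fun i => ULift.up (F i).card)
    (mk_le_aleph0.trans_lt hℵ)
  obtain ⟨B, hB, hBκ, hR⟩ := exists_subset_mk_eq_inter_subset_of_card_le hκ hℵ m F hm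
    fun i hi => (congrArg ULift.down hi.2).le
  exact ⟨B, fun i hi => (hB hi).1, hBκ, hR⟩

theorem exists_subset_mk_eq_dist_lt {Z : Type u} [PseudoMetricSpace Z]
    [TopologicalSpace.SeparableSpace Z] (hκ : κ.IsRegular) (hℵ : ℵ₀ < κ) (f : ι → Z)
    {A : Set ι} (hA : #A = κ) {δ : ℝ} (hδ : 0 < δ) :
    ∃ B ⊆ A, #B = κ ∧ ∀ i ∈ B, ∀ j ∈ B, dist (f i) (f j) < δ := by
  obtain ⟨D, hDc, hDd⟩ := TopologicalSpace.exists_countable_dense Z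
  have := hDc.to_subtype
  choose g hg using fun i => Metric.dense_iff.1 hDd (f i) (δ / 2) (half_pos hδ)
  obtain ⟨d, hd⟩ := exists_mk_fiber_eq hκ hA (fun i => (⟨g i, (hg i).2⟩ : D))
    (mk_le_aleph0.trans_lt hℵ)
  refine ⟨_, sep_subset _ _, hd, fun i hi j hj => ?_⟩
  have hgij : g i = g j := congrArg Subtype.val (hi.2.trans hj.2.symm)
  calc dist (f i) (f j) ≤ dist (f i) (g i) + dist (g j) (f j) := by
        rw [hgij]; exact dist_triangle _ _ _
    _ < δ / 2 + δ / 2 := by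
        rw [dist_comm (f i)]
        exact add_lt_add (hg i).1 (hg j).1
    _ = δ := add_halves δ

end Combinatorics

theorem exists_finset_dist_lt_subset_of_mem_nhds {T : Type*} {X : T → Type*}
    [∀ t, PseudoMetricSpace (X t)] {x : ∀ t, X t} {V : Set (∀ t, X t)} (hV : V ∈ 𝓝 x) :
    ∃ F : Finset T, ∃ ε > 0, {y | ∀ t ∈ F, dist (y t) (x t) < ε} ⊆ V := by
  rw [nhds_pi, mem_pi'] at hV
  obtain ⟨F, W, hW, hFW⟩ := hV
  choose r hr hrW using fun t => Metric.mem_nhds_iff.1 (hW t)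
  obtain ⟨ε, hε, hεr⟩ :=
    ((eventually_all_finset F).2 fun t _ => eventually_lt_nhds (hr t)).exists_gt
  exact ⟨F, ε, hε, fun y hy => hFW fun t ht => hrW t ((hy t ht).trans (hεr t ht))⟩

theorem exists_forall_dist_lt_of_pairwise_dist_lt {ι T : Type*} {X : T → Type*}
    [∀ t, PseudoMetricSpace (X t)] {x : ι → ∀ t, X t} {F : ι → Set T} {B : Set ι} {δ : ℝ}
    (hB : B.Nonempty) (h : ∀ i ∈ B, ∀ j ∈ B, ∀ t ∈ F i, t ∈ F j → dist (x i t) (x j t) < δ) :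
    ∃ z : ∀ t, X t, ∀ i ∈ B, ∀ t ∈ F i, dist (z t) (x i t) < δ := by
  classical
  obtain ⟨i₀, -⟩ := hB
  refine ⟨fun t => if h : ∃ j ∈ B, t ∈ F j then x h.choose t else x i₀ t, fun i hi t ht => ?_⟩
  have hex : ∃ j ∈ B, t ∈ F j := ⟨i, hi, ht⟩
  dsimp only
  rw [dif_pos hex]
  exact h _ hex.choose_spec.1 i hi t hex.choose_spec.2 ht

theorem isCaliber_of_forall_exists_dist_lt {T : Type u} {X : T → Type u}
    [∀ t, PseudoMetricSpace (X t)] [∀ t, TopologicalSpace.SeparableSpace (X t)] (S : Set (∀ t, X t))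
    (hdense : ∀ y : ∀ t, X t, ∀ ε : ℝ, 0 < ε → ∃ x ∈ S, ∀ t, dist (x t) (y t) < ε)
    {κ : Cardinal.{u}} (hκ : κ.IsRegular) (hℵ : ℵ₀ < κ) : IsCaliber S κ := by
  classical
  intro ι U hι hU
  choose x hxU using fun i => (hU i).2
  choose V hV hVU using fun i => (mem_nhds_subtype _ _ _).1 ((hU i).1.mem_nhds (hxU i))
  choose F ε hε hFV using fun i => exists_finset_dist_lt_subset_of_mem_nhds (hV i)
  choose n hn using fun i => exists_nat_one_div_lt (hε i)
  obtain ⟨⟨N⟩, hN⟩ := exists_mk_fiber_eq hκ (A := univ) (by rwa [mk_univ])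
    (fun i => ULift.up (n i)) (mk_le_aleph0.trans_lt hℵ)
  obtain ⟨B₁, hB₁, hB₁κ, R, hR⟩ := exists_subset_mk_eq_inter_subset hκ hℵ F hN
  set δ : ℝ := 1 / (N + 1)
  have hδ : 0 < δ := Nat.one_div_pos_of_nat
  obtain ⟨B, hB, hBκ, hclose⟩ := exists_subset_mk_eq_dist_lt hκ hℵ
    (fun i (t : R) => (x i).1 t) hB₁κ (half_pos hδ)
  have hagree : ∀ i ∈ B, ∀ j ∈ B, ∀ t ∈ (F i : Set T), t ∈ (F j : Set T) →
      dist ((x i).1 t) ((x j).1 t) < δ / 2 := by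
    intro i hi j hj t hti htj
    rcases eq_or_ne i j with rfl | hij
    · simpa using half_pos hδ
    · have ht : t ∈ R := hR i (hB hi) j (hB hj) hij (Finset.mem_inter.2 ⟨hti, htj⟩)
      exact (dist_le_pi_dist _ _ ⟨t, ht⟩).trans_lt (hclose i hi j hj)
  have hBne : B.Nonempty := by
    rw [← nonempty_coe_sort, ← mk_ne_zero_iff, hBκ]
    exact hκ.pos.ne'
  obtain ⟨z, hz⟩ := exists_forall_dist_lt_of_pairwise_dist_lt hBne hagree
  obtain ⟨w, hwS, hw⟩ := hdense z (δ / 2) (half_pos hδ)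
  refine ⟨B, hBκ, ⟨w, hwS⟩, mem_iInter₂.2 fun i hi => hVU i (hFV i fun t ht => ?_)⟩
  have hni : n i = N := congrArg ULift.down (hB₁ (hB hi)).2
  calc dist (w t) ((x i).1 t) ≤ dist (w t) (z t) + dist (z t) ((x i).1 t) := dist_triangle _ _ _
    _ < δ / 2 + δ / 2 := add_lt_add (hw t) (hz i hi t ht)
    _ = δ := add_halves δ
    _ < ε i := by simpa only [hni] using hn i

section StronglyBaire

variable {Y : Type u} [TopologicalSpace Y]

theorem IsCaliber.exists_subset_of_subset_iUnion {ι : Type u} [LinearOrder ι]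
    (hcal : IsCaliber Y #ι) (hsmall : ∀ i : ι, #(Iio i) < #ι) {C : ι → Set Y}
    (hmono : Monotone C) (hC : ∀ i, IsClosed (C i)) {U : Set Y} (hU : IsOpen U)
    (hne : U.Nonempty) (hcover : U ⊆ ⋃ i, C i) : ∃ i, U ⊆ C i := by
  by_contra! h
  obtain ⟨s, hs, y, hy⟩ := hcal ι (fun i => U \ C i) rfl fun i =>
    ⟨hU.sdiff (hC i), sdiff_nonempty.2 (h i)⟩
  obtain ⟨i₀, -⟩ := mem_iUnion.1 (hcover hne.some_mem)
  obtain ⟨j₀, hj₀⟩ : s.Nonempty := by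
    rw [← nonempty_coe_sort, ← mk_ne_zero_iff, hs, mk_ne_zero_iff]
    exact ⟨i₀⟩
  obtain ⟨i, hi⟩ := mem_iUnion.1 (hcover (mem_iInter₂.1 hy j₀ hj₀).1)
  obtain ⟨j, hj, hij⟩ : ∃ j ∈ s, i ≤ j := by
    by_contra! hlt
    exact (hs ▸ mk_le_mk_of_subset hlt).not_gt (hsmall i)
  exact (mem_iInter₂.1 hy j hj).2 (hmono hij hi)

theorem exists_inter_interior_nonempty_of_subset_iUnion [BaireSpace Y] {ι : Type*}
    [Countable ι] {C : ι → Set Y} (hC : ∀ i, IsClosed (C i)) {U : Set Y} (hU : IsOpen U)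
    (hne : U.Nonempty) (hcover : U ⊆ ⋃ i, C i) : ∃ i, (U ∩ interior (C i)).Nonempty := by
  obtain ⟨i₀, -⟩ := mem_iUnion.1 (hcover hne.some_mem)
  have hdense : Dense (⋃ i, interior (C i ∪ Uᶜ)) := by
    refine dense_iUnion_interior_of_closed (fun i => (hC i).union hU.isClosed_compl) ?_
    refine eq_univ_of_forall fun y => ?_
    by_cases hy : y ∈ U
    · exact (mem_iUnion.1 (hcover hy)).elim fun i hi => mem_iUnion.2 ⟨i, Or.inl hi⟩
    · exact mem_iUnion.2 ⟨i₀, Or.inr hy⟩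
  obtain ⟨y, hyU, hy⟩ := hdense.inter_open_nonempty U hU hne
  obtain ⟨i, hi⟩ := mem_iUnion.1 hy
  have hsub : U ∩ interior (C i ∪ Uᶜ) ⊆ interior (C i) :=
    interior_maximal (fun z hz => (interior_subset hz.2).resolve_right (not_not.2 hz.1))
      (hU.inter isOpen_interior)
  exact ⟨i, y, hyU, hsub ⟨hyU, hi⟩⟩

theorem Ordinal.exists_monotone_cofinal_toType_ord_cof (α : Ordinal.{u}) :
    ∃ g : α.cof.ord.ToType → Ordinal.{u}, Monotone g ∧ (∀ i, g i < α) ∧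
      ∀ ξ < α, ∃ i, ξ ≤ g i := by
  obtain ⟨f, hf⟩ := Ordinal.exists_isFundamentalSeq (o := α) rfl
  refine ⟨fun i => f (ToType.mk.symm i), fun i j hij => ?_, fun i => (f _).2, fun ξ hξ => ?_⟩
  · exact hf.strictMono.monotone (ToType.mk.symm.monotone hij)
  · obtain ⟨_, ⟨k, rfl⟩, hk⟩ := hf.isCofinal_range ⟨ξ, hξ⟩
    exact ⟨ToType.mk k, by simpa using Subtype.coe_le_coe.2 hk⟩

theorem exists_inter_interior_nonempty_of_subset_biUnion_Iio [BaireSpace Y]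
    (hcal : ∀ κ : Cardinal.{u}, κ.IsRegular → ℵ₀ < κ → IsCaliber Y κ) {α : Ordinal.{u}}
    {B : Ordinal.{u} → Set Y} (hBc : ∀ ξ < α, IsClosed (B ξ))
    (hBmono : ∀ ξ η, ξ ≤ η → η < α → B ξ ⊆ B η) {U : Set Y} (hU : IsOpen U)
    (hne : U.Nonempty) (hcover : U ⊆ ⋃ ξ ∈ Iio α, B ξ) :
    ∃ ξ < α, (U ∩ interior (B ξ)).Nonempty := by
  rcases Ordinal.zero_or_succ_or_isSuccLimit α with rfl | ⟨β, rfl⟩ | hlim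
  · simpa using hcover hne.some_mem
  · have hUB : U ⊆ B β := fun y hy => by
      obtain ⟨ξ, hξ, hyξ⟩ := mem_iUnion₂.1 (hcover hy)
      exact hBmono ξ β (Order.lt_succ_iff.1 hξ) (Order.lt_succ β) hyξ
    exact ⟨β, Order.lt_succ β, hne.mono (subset_inter subset_rfl (interior_maximal hUB hU))⟩
  obtain ⟨g, hgmono, hgα, hgcof⟩ := α.exists_monotone_cofinal_toType_ord_cof
  have hcover' : U ⊆ ⋃ i, B (g i) := fun y hy => by
    obtain ⟨ξ, hξ, hyξ⟩ := mem_iUnion₂.1 (hcover hy)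
    obtain ⟨i, hi⟩ := hgcof ξ hξ
    exact mem_iUnion.2 ⟨i, hBmono ξ (g i) hi (hgα i) hyξ⟩
  suffices h : ∃ i, (U ∩ interior (B (g i))).Nonempty by
    obtain ⟨i, hi⟩ := h
    exact ⟨g i, hgα i, hi⟩
  have hreg := Cardinal.isRegular_cof hlim
  have hmk : #α.cof.ord.ToType = α.cof := mk_ord_toType _
  rcases hreg.aleph0_le.eq_or_lt with hcof | hcof
  · have : Countable α.cof.ord.ToType := by rw [← mk_le_aleph0_iff, hmk, ← hcof]
    exact exists_inter_interior_nonempty_of_subset_iUnion (fun i => hBc _ (hgα i)) hU hne hcover'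
  · have hcalι : IsCaliber Y #α.cof.ord.ToType := by rw [hmk]; exact hcal _ hreg hcof
    obtain ⟨i, hi⟩ := hcalι.exists_subset_of_subset_iUnion
      (fun i => by simpa using mk_Iio_lt i) (fun i j hij => hBmono _ _ (hgmono hij) (hgα j))
      (fun i => hBc _ (hgα i)) hU hne hcover'
    exact ⟨i, hne.mono (subset_inter subset_rfl (interior_maximal hi hU))⟩

theorem stronglyBaire_of_isCaliber [BaireSpace Y]
    (hcal : ∀ κ : Cardinal.{u}, κ.IsRegular → ℵ₀ < κ → IsCaliber Y κ) : StronglyBaire Y := by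
  intro α A B _ hBc _ hBmono hAB _ p hp
  rw [mem_closure_iff]
  intro O hO hpO
  have hcover : O ∩ interior (⋃ ξ ∈ Iio α, A ξ) ⊆ ⋃ ξ ∈ Iio α, B ξ := fun y hy => by
    obtain ⟨ξ, hξ, hyξ⟩ := mem_iUnion₂.1 (interior_subset hy.2)
    exact mem_iUnion₂.2 ⟨ξ, hξ, hAB ξ hξ hyξ⟩
  obtain ⟨ξ, hξ, y, ⟨hyO, -⟩, hyB⟩ := exists_inter_interior_nonempty_of_subset_biUnion_Iio hcal
    hBc hBmono (hO.inter isOpen_interior) ⟨p, hpO, hp⟩ hcover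
  exact ⟨y, hyO, mem_biUnion hξ hyB⟩

end StronglyBaire

/-- Let `(X t)` be separable metric spaces and `S ⊆ ∏ t, X t` a Baire space (with the
product topology) which is dense in `∏ t, X t` for the topology of uniform convergence
(equivalently, for the sup-metric: every point of the product can be uniformly
approximated by points of `S`). Then every uncountable regular cardinal is a caliber of
`S`, and `S` is a strongly Baire space. -/
theorem dense_uniform_baire_caliber_stronglyBaire {T : Type u} (X : T → Type u)
    [∀ t, MetricSpace (X t)] [∀ t, TopologicalSpace.SeparableSpace (X t)]
    (S : Set (∀ t, X t)) [BaireSpace S]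
    (hdense : ∀ y : ∀ t, X t, ∀ ε : ℝ, 0 < ε → ∃ x ∈ S, ∀ t, dist (x t) (y t) < ε) :
    (∀ κ : Cardinal.{u}, κ.IsRegular → Cardinal.aleph0 < κ → IsCaliber S κ)
    ∧ StronglyBaire S := by
  have hcal : ∀ κ : Cardinal.{u}, κ.IsRegular → ℵ₀ < κ → IsCaliber S κ :=
    fun _ hκ hℵ => isCaliber_of_forall_exists_dist_lt S hdense hκ hℵ
  exact ⟨hcal, stronglyBaire_of_isCaliber hcal⟩
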